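/- Each iteration of the fuzzy c-means algorithm does not increase the objective: if (u, C) is the current state, C' is obtained from u by the centre update C'_k = (Σ_i u_{k,i}^m X_i)/(Σ_i u_{k,i}^m), and u' is obtained from C' by the membership update, then J(u', C') ≤ J(u, C), where J(u,C) = Σ_k Σ_i u_{k,i}^m ‖X_i − C_k‖². -/

import Mathlib

open Finset

/-!
The two half-steps of an iteration are each exact minimisations, which is why neither increases
`J`. For fixed memberships, `J` splits over the clusters into weighted sums of squared distances,
each minimised by the weighted mean `C'_k` (a parallel-axis identity). For fixed centres, `J`
splits over the points into sums `∑ₖ uₖ^m dₖ` that are convex on the simplex; the membership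
update makes `uₖ^(m-1) dₖ` independent of `k`, the first-order (Lagrange) condition, and the
tangent-line inequality for `t ↦ t^m` turns this into global minimality.
-/

lemma rpow_tangent_le_rpow {m a b : ℝ} (hm : 1 ≤ m) (ha : 0 ≤ a) (hb : 0 < b) :
    b ^ m + m * b ^ (m - 1) * (a - b) ≤ a ^ m := by
  have hbernoulli := one_add_mul_self_le_rpow_one_add
    (by linarith [div_nonneg ha hb.le] : (-1 : ℝ) ≤ a / b - 1) hm
  rw [add_sub_cancel, Real.div_rpow ha hb.le] at hbernoulli
  have hbm : 0 < b ^ m := Real.rpow_pos_of_pos hb m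
  calc b ^ m + m * b ^ (m - 1) * (a - b)
      = b ^ m * (1 + m * (a / b - 1)) := by
        rw [Real.rpow_sub hb, Real.rpow_one]; field_simp
    _ ≤ b ^ m * (a ^ m / b ^ m) := mul_le_mul_of_nonneg_left hbernoulli hbm.le
    _ = a ^ m := by field_simp

section WeightedMean

variable {ι E : Type*} [Fintype ι] [NormedAddCommGroup E] [InnerProductSpace ℝ E]

lemma sum_smul_sub_centerMass_eq_zero (w : ι → ℝ) (hW : ∑ i, w i ≠ 0) (x : ι → E) :
    ∑ i, w i • (x i - univ.centerMass w x) = 0 := by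
  rw [Finset.centerMass]
  simp only [smul_sub]
  rw [sum_sub_distrib, ← sum_smul, smul_inv_smul₀ hW, sub_self]

lemma sum_mul_norm_sub_sq_eq_centerMass (w : ι → ℝ) (hW : ∑ i, w i ≠ 0) (x : ι → E) (c : E) :
    ∑ i, w i * ‖x i - c‖ ^ 2 =
      ∑ i, w i * ‖x i - univ.centerMass w x‖ ^ 2 +
        (∑ i, w i) * ‖univ.centerMass w x - c‖ ^ 2 := by
  set μ := univ.centerMass w x
  have hcross : ∑ i, w i * inner ℝ (x i - μ) (μ - c) = 0 := by
    simp_rw [← real_inner_smul_left]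
    rw [← sum_inner, sum_smul_sub_centerMass_eq_zero w hW x, inner_zero_left]
  have hsplit : ∀ i, ‖x i - c‖ ^ 2 = ‖x i - μ‖ ^ 2 + 2 * inner ℝ (x i - μ) (μ - c) + ‖μ - c‖ ^ 2 :=
    fun i => by rw [← norm_add_sq_real, sub_add_sub_cancel]
  simp_rw [hsplit, mul_add, sum_add_distrib, ← sum_mul, mul_left_comm _ (2 : ℝ), ← mul_sum,
    hcross]
  ring

lemma sum_mul_norm_sub_centerMass_sq_le (w : ι → ℝ) (hW : 0 < ∑ i, w i) (x : ι → E) (c : E) :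
    ∑ i, w i * ‖x i - univ.centerMass w x‖ ^ 2 ≤ ∑ i, w i * ‖x i - c‖ ^ 2 := by
  rw [sum_mul_norm_sub_sq_eq_centerMass w hW.ne' x c]
  exact le_add_of_nonneg_right (by positivity)

end WeightedMean

section Membership

variable {ι : Type*} [Fintype ι]

lemma sum_rpow_mul_le_of_rpow_sub_one_mul_eq {m lam : ℝ} (hm : 1 ≤ m) {d u u' : ι → ℝ}
    (hd : ∀ k, 0 ≤ d k) (hu : ∀ k, 0 ≤ u k) (hu' : ∀ k, 0 < u' k) (hsum : ∑ k, u k = ∑ k, u' k)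
    (hstat : ∀ k, u' k ^ (m - 1) * d k = lam) :
    ∑ k, u' k ^ m * d k ≤ ∑ k, u k ^ m * d k := by
  have htangent : ∀ k, u' k ^ m * d k + m * lam * (u k - u' k) ≤ u k ^ m * d k := fun k =>
    calc u' k ^ m * d k + m * lam * (u k - u' k)
        = (u' k ^ m + m * u' k ^ (m - 1) * (u k - u' k)) * d k := by rw [← hstat k]; ring
      _ ≤ u k ^ m * d k := mul_le_mul_of_nonneg_right (rpow_tangent_le_rpow hm (hu k) (hu' k)) (hd k)
  have hlinear : ∑ k, m * lam * (u k - u' k) = 0 := by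
    rw [← mul_sum, sum_sub_distrib, hsum, sub_self, mul_zero]
  have hsum_tangent := sum_le_sum fun k (_ : k ∈ univ) => htangent k
  rwa [sum_add_distrib, hlinear, add_zero] at hsum_tangent

noncomputable def fcmMembership (m : ℝ) (r : ι → ℝ) (k : ι) : ℝ :=
  (r k ^ (2 / (m - 1)))⁻¹ / ∑ j, (r j ^ (2 / (m - 1)))⁻¹

variable {m : ℝ} {r : ι → ℝ}

lemma fcmMembership_pos [Nonempty ι] (hr : ∀ k, 0 < r k) (k : ι) : 0 < fcmMembership m r k := by
  unfold fcmMembership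
  have hterm : ∀ j, 0 < (r j ^ (2 / (m - 1)))⁻¹ := fun j => by have := hr j; positivity
  exact div_pos (hterm k) (sum_pos (fun j _ => hterm j) univ_nonempty)

lemma sum_fcmMembership [Nonempty ι] (hr : ∀ k, 0 < r k) : ∑ k, fcmMembership m r k = 1 := by
  have hS : 0 < ∑ j, (r j ^ (2 / (m - 1)))⁻¹ :=
    sum_pos (fun j _ => by have := hr j; positivity) univ_nonempty
  unfold fcmMembership
  rw [← sum_div, div_self hS.ne']

lemma fcmMembership_rpow_sub_one_mul_sq (hm : m ≠ 1) (hr : ∀ k, 0 < r k) (k : ι) :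
    fcmMembership m r k ^ (m - 1) * r k ^ 2 = ((∑ j, (r j ^ (2 / (m - 1)))⁻¹) ^ (m - 1))⁻¹ := by
  have hm1 : m - 1 ≠ 0 := sub_ne_zero.mpr hm
  have hrk := hr k
  have hS : 0 ≤ ∑ j, (r j ^ (2 / (m - 1)))⁻¹ := sum_nonneg fun j _ => by have := hr j; positivity
  have hpow : (r k ^ (2 / (m - 1))) ^ (m - 1) = r k ^ 2 := by
    rw [← Real.rpow_mul hrk.le, div_mul_cancel₀ _ hm1, Real.rpow_two]
  rw [fcmMembership, Real.div_rpow (by positivity) hS, Real.inv_rpow (by positivity), hpow]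
  field_simp

lemma sum_fcmMembership_rpow_mul_sq_le (hm : 1 < m) (hr : ∀ k, 0 < r k) {u : ι → ℝ}
    (hu : ∀ k, 0 ≤ u k) (hu1 : ∑ k, u k = 1) :
    ∑ k, fcmMembership m r k ^ m * r k ^ 2 ≤ ∑ k, u k ^ m * r k ^ 2 := by
  have : Nonempty ι := univ_nonempty_iff.mp (nonempty_of_sum_ne_zero (hu1.trans_ne one_ne_zero))
  exact sum_rpow_mul_le_of_rpow_sub_one_mul_eq hm.le (fun k => sq_nonneg (r k)) hu
    (fcmMembership_pos hr) (by rw [hu1, sum_fcmMembership hr])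
    (fcmMembership_rpow_sub_one_mul_sq hm.ne' hr)

end Membership

/-- One iteration of fuzzy c-means (centre update followed by
membership update) does not increase the objective `J(u,C) = ∑ₖ∑ᵢ u_{k,i}^m ‖X_i − C_k‖²`. -/
theorem fcm_iteration_decreases_objective
    (D n K : ℕ) (m : ℝ) (hm : 1 < m)
    (X : Fin n → EuclideanSpace ℝ (Fin D))
    (u : Fin K → Fin n → ℝ)
    (hu : ∀ k i, 0 ≤ u k i) (hu1 : ∀ i, ∑ k, u k i = 1)
    (C C' : Fin K → EuclideanSpace ℝ (Fin D))
    (hden : ∀ k, 0 < ∑ i, u k i ^ m)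
    (hC' : ∀ k, C' k = (∑ i, u k i ^ m)⁻¹ • ∑ i, u k i ^ m • X i)
    (hdist : ∀ k i, 0 < ‖X i - C' k‖)
    (u' : Fin K → Fin n → ℝ)
    (hu' : ∀ k i, u' k i =
      (‖X i - C' k‖ ^ (2/(m-1)))⁻¹ / ∑ j, (‖X i - C' j‖ ^ (2/(m-1)))⁻¹) :
    ∑ k, ∑ i, u' k i ^ m * ‖X i - C' k‖^2 ≤
      ∑ k, ∑ i, u k i ^ m * ‖X i - C k‖^2 := by
  calc ∑ k, ∑ i, u' k i ^ m * ‖X i - C' k‖ ^ 2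
      = ∑ i, ∑ k, fcmMembership m (fun k => ‖X i - C' k‖) k ^ m * ‖X i - C' k‖ ^ 2 := by
        rw [sum_comm]; simp only [hu', fcmMembership]
    _ ≤ ∑ i, ∑ k, u k i ^ m * ‖X i - C' k‖ ^ 2 := sum_le_sum fun i _ =>
        sum_fcmMembership_rpow_mul_sq_le hm (fun k => hdist k i) (fun k => hu k i) (hu1 i)
    _ = ∑ k, ∑ i, u k i ^ m * ‖X i - C' k‖ ^ 2 := sum_comm
    _ ≤ ∑ k, ∑ i, u k i ^ m * ‖X i - C k‖ ^ 2 := sum_le_sum fun k _ => by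
        rw [hC' k]
        exact sum_mul_norm_sub_centerMass_sq_le (fun i => u k i ^ m) (hden k) X (C k)
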